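/- arXiv:1610.03277 — 5 statements merged into one kernel-verified Lean document; each statement's English description precedes it below -/
import Mathlib

section
/- Let $R$ be a commutative ring and let $S \subseteq R[X,X^{-1}]$ be the multiplicative set of Laurent polynomials whose leading and trailing coefficients are units in $R$. Then the canonical ring homomorphism from the localization $S^{-1}R[X,X^{-1}]$ to the formal Laurent series ring $R((X)) = R[[X]][X^{-1}]$ (sending $P/Q$ to $P \cdot Q^{-1}$, where $Q^{-1}$ is the inverse of $Q$ in $R((X))$) is injective. -/
open Pointwise

/-- The Laurent polynomial ring `R[X,X⁻¹]`, realized as the subring of finite-support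
elements of the Laurent series ring `R((X))`. -/
noncomputable def LPsub (R : Type*) [CommRing R] : Subring (LaurentSeries R) where
  carrier := {f | f.support.Finite}
  zero_mem' := by simp [HahnSeries.support_zero]
  one_mem' := by
    have : (1 : LaurentSeries R) = HahnSeries.single 0 1 := by simp
    rw [Set.mem_setOf_eq, this]
    exact (Set.finite_singleton (0 : ℤ)).subset HahnSeries.support_single_subset
  add_mem' := fun ha hb => (ha.union hb).subset (HahnSeries.support_add_subset _ _)
  neg_mem' := fun ha => by simpa [HahnSeries.support_neg] using ha
  mul_mem' := fun ha hb => (ha.add hb).subset HahnSeries.support_mul_subset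

/-- `f` is a Laurent polynomial whose leading and trailing coefficients are units. -/
def UnitEnds {R : Type*} [CommRing R] (f : LaurentSeries R) : Prop :=
  ∃ m n : ℤ, (∀ k ∈ f.support, m ≤ k ∧ k ≤ n) ∧ IsUnit (f.coeff m) ∧ IsUnit (f.coeff n)

/-- The multiplicative set `S` of Laurent polynomials with unit leading and trailing
coefficients, as a submonoid of the Laurent polynomial ring. -/
noncomputable def Sunit (R : Type*) [CommRing R] : Submonoid (LPsub R) :=
  Submonoid.closure {P : LPsub R | UnitEnds (P : LaurentSeries R)}

theorem IsLocalization.injective_of_injective_comp_algebraMap {R S T : Type*}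
    [CommSemiring R] (M : Submonoid R) [CommSemiring S] [Algebra R S] [IsLocalization M S]
    [CommSemiring T] (f : S →+* T) (hf : Function.Injective (f.comp (algebraMap R S))) :
    Function.Injective f :=
  (IsLocalization.injective_iff_map_algebraMap_eq M f).2 fun _ _ =>
    ⟨congrArg f, fun h => congrArg (algebraMap R S) (hf h)⟩

/-- The canonical ring homomorphism `S⁻¹R[X,X⁻¹] → R((X))` (i.e., any ring map from
the localization restricting to the inclusion on `R[X,X⁻¹]`, which necessarily sends
`P/Q` to `P·Q⁻¹`) is injective. -/
theorem localization_to_laurentSeries_injective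
    (R : Type*) [CommRing R]
    (φ : Localization (Sunit R) →+* LaurentSeries R)
    (hφ : ∀ p : LPsub R,
      φ (algebraMap (LPsub R) (Localization (Sunit R)) p) = (p : LaurentSeries R)) :
    Function.Injective φ := by
  have hcomp : ⇑(φ.comp (algebraMap (LPsub R) (Localization (Sunit R)))) = Subtype.val :=
    funext hφ
  refine IsLocalization.injective_of_injective_comp_algebraMap (Sunit R) φ ?_
  rw [hcomp]
  exact Subtype.val_injective
end

section
/- Let $R$ be a commutative Noetherian ring, let $f \in R((X)) = R[[X]][X^{-1}]$, and let $M_f$ denote the $R[X,X^{-1}]$-submodule of $R((X))/R[X,X^{-1}]$ generated by the image of $f$. If $M_f$ is finitely generated as an $R$-module, then there exists a Laurent polynomial $Q \in R[X,X^{-1}]$ whose leading and trailing coefficients are units in $R$ such that $Qf \in R[X,X^{-1}]$, i.e. $f$ lies in the image of $S^{-1}R[X,X^{-1}]$ in $R((X))$. -/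
/-!
As `M_f` is finitely generated over the Noetherian ring `R`, the classes of `X f, X² f, …`
modulo `R[X,X⁻¹]` satisfy a relation `X^(K+1) f ≡ ∑_{j<K} c_j X^(j+1) f`, and the classes of
`X⁻¹ f, X⁻² f, …` one of the form `X^(-M-1) f ≡ ∑_{j<M} b_j X^(-j-1) f`. So
`χ = X^(K+1) - ∑ c_j X^(j+1)` and `ψ = X^(-M-1) - ∑ b_j X^(-j-1)` both multiply `f` into
`R[X,X⁻¹]`; their supports lie in `[1, K+1]` and `[-M-1, -1]`, so `Q = ψ + χ` has leading and
trailing coefficient `1`.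
-/

open Submodule HahnSeries

theorem IsNoetherian.exists_sum_smul_eq {R V : Type*} [Ring R] [AddCommGroup V]
    [Module R V] [IsNoetherian R V] (g : ℕ → V) :
    ∃ (K : ℕ) (c : Fin K → R), ∑ j, c j • g j = g K := by
  let s : ℕ →o Submodule R V :=
    ⟨fun k ↦ span R (Set.range fun j : Fin k ↦ g j), fun k l hkl ↦
      span_mono <| Set.range_subset_iff.mpr fun j ↦ ⟨Fin.castLE hkl j, rfl⟩⟩
  obtain ⟨K, hK⟩ := monotone_stabilizes_iff_noetherian.mpr inferInstance s
  have hgK : g K ∈ s K := (hK (K + 1) K.le_succ).symm ▸ subset_span ⟨Fin.last K, rfl⟩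
  exact ⟨K, (mem_span_range_iff_exists_fun R).mp hgK⟩

theorem exists_sum_smul_eq_of_mem_fg {R V : Type*} [CommRing R] [IsNoetherianRing R]
    [AddCommGroup V] [Module R V] {N : Submodule R V} (hN : N.FG) (g : ℕ → V)
    (hg : ∀ n, g n ∈ N) : ∃ (K : ℕ) (c : Fin K → R), ∑ j, c j • g j = g K := by
  have := isNoetherian_of_fg_of_noetherian N hN
  obtain ⟨K, c, hc⟩ := IsNoetherian.exists_sum_smul_eq (R := R) fun n ↦ (⟨g n, hg n⟩ : N)
  exact ⟨K, c, by simpa using congrArg Subtype.val hc⟩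

namespace HahnSeries

variable (Γ R : Type*) [PartialOrder Γ] [Semiring R]

/-- For `Γ = ℤ` this is `R[X,X⁻¹]` inside `R((X))`. -/
def finSuppSubmodule : Submodule R (HahnSeries Γ R) where
  carrier := {x | x.support.Finite}
  add_mem' ha hb := (ha.union hb).subset (support_add_subset ..)
  zero_mem' := by simp
  smul_mem' r x hx := hx.subset fun a ha h0 ↦ ha (by simp [h0])

end HahnSeries

section Relation

variable {R : Type*} [CommRing R]

noncomputable def monicRelation {K : ℕ} (a : ℤ) (e : Fin K → ℤ) (c : Fin K → R) :
    LaurentSeries R :=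
  single a 1 - ∑ j, c j • single (e j) 1

theorem support_monicRelation_subset {K : ℕ} (a : ℤ) (e : Fin K → ℤ) (c : Fin K → R) :
    (monicRelation a e c).support ⊆ insert a (Set.range e) := by
  intro x hx
  by_contra hxs
  simp only [Set.mem_insert_iff, Set.mem_range, not_or, not_exists] at hxs
  apply hx
  simp [monicRelation, coeff_sum, hxs.1, fun j ↦ Ne.symm (hxs.2 j)]

theorem coeff_monicRelation_self {K : ℕ} {a : ℤ} {e : Fin K → ℤ} (ha : a ∉ Set.range e)
    (c : Fin K → R) : (monicRelation a e c).coeff a = 1 := by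
  simp only [Set.mem_range, not_exists] at ha
  simp [monicRelation, coeff_sum, fun j ↦ Ne.symm (ha j)]

theorem monicRelation_mul {K : ℕ} (a : ℤ) (e : Fin K → ℤ) (c : Fin K → R)
    (f : LaurentSeries R) :
    monicRelation a e c * f = single a 1 * f - ∑ j, c j • (single (e j) 1 * f) := by
  simp only [monicRelation, sub_mul, Finset.sum_mul, ← single_zero_mul_eq_smul, mul_assoc]

end Relation

section UnitEnds

variable {R : Type*} [CommRing R]

theorem UnitEnds.support_finite {f : LaurentSeries R} (hf : UnitEnds f) : f.support.Finite :=
  let ⟨m, n, hmn, _⟩ := hf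
  (Set.finite_Icc m n).subset fun k hk ↦ hmn k hk

theorem coeff_eq_zero_of_support_subset_Icc {f : LaurentSeries R} {a b k : ℤ}
    (hf : f.support ⊆ Set.Icc a b) (hk : k ∉ Set.Icc a b) : f.coeff k = 0 :=
  Function.notMem_support.mp fun h ↦ hk (hf h)

theorem unitEnds_add {ψ χ : LaurentSeries R} {m n a b : ℤ} (hψ : ψ.support ⊆ Set.Icc m n)
    (hχ : χ.support ⊆ Set.Icc a b) (hma : m < a) (hnb : n < b) (hm : IsUnit (ψ.coeff m))
    (hb : IsUnit (χ.coeff b)) : UnitEnds (ψ + χ) := by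
  refine ⟨m, b, fun k hk ↦ ?_, ?_, ?_⟩
  · rcases support_add_subset ψ χ hk with hk | hk
    · have := hψ hk; simp only [Set.mem_Icc] at this; omega
    · have := hχ hk; simp only [Set.mem_Icc] at this; omega
  · rwa [coeff_add, coeff_eq_zero_of_support_subset_Icc hχ fun h ↦ absurd h.1 (by omega),
      add_zero]
  · rwa [coeff_add, coeff_eq_zero_of_support_subset_Icc hψ fun h ↦ absurd h.2 (by omega),
      zero_add]

end UnitEnds

section Quotient

variable {R : Type*} [CommRing R]

theorem mkQ_mul_mem_span {k : ℕ} {P : Fin k → LaurentSeries R} {f : LaurentSeries R}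
    (hP : ∀ p : LaurentSeries R, p.support.Finite →
      ∃ (c : Fin k → R) (q : LaurentSeries R), q.support.Finite ∧
        p * f = (∑ i, c i • (P i * f)) + q)
    {p : LaurentSeries R} (hp : p.support.Finite) :
    (finSuppSubmodule ℤ R).mkQ (p * f) ∈
      span R (Set.range fun i ↦ (finSuppSubmodule ℤ R).mkQ (P i * f)) := by
  obtain ⟨c, q, hq, hpf⟩ := hP p hp
  have hq0 : (finSuppSubmodule ℤ R).mkQ q = 0 := by rwa [← LinearMap.mem_ker, ker_mkQ]
  rw [hpf, map_add, hq0, add_zero, map_sum]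
  exact sum_mem fun i _ ↦ by rw [map_smul]; exact smul_mem _ _ (subset_span ⟨i, rfl⟩)

theorem exists_monicRelation_mul_mem [IsNoetherianRing R]
    {N : Submodule R (LaurentSeries R ⧸ finSuppSubmodule ℤ R)} (hN : N.FG) {f : LaurentSeries R}
    (hf : ∀ t, (finSuppSubmodule ℤ R).mkQ (single t 1 * f) ∈ N) (e : ℕ → ℤ) :
    ∃ (K : ℕ) (c : Fin K → R),
      monicRelation (e K) (fun j : Fin K ↦ e j) c * f ∈ finSuppSubmodule ℤ R := by
  obtain ⟨K, c, hc⟩ := exists_sum_smul_eq_of_mem_fg hN _ fun n ↦ hf (e n)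
  refine ⟨K, c, ?_⟩
  rw [← ker_mkQ (finSuppSubmodule ℤ R), LinearMap.mem_ker, monicRelation_mul, map_sub, map_sum]
  simp only [map_smul]
  rw [hc, sub_self]

end Quotient

/-- Let `R` be Noetherian and `f ∈ R((X))`.  If the cyclic `R[X,X⁻¹]`-submodule `M_f`
of `R((X))/R[X,X⁻¹]` generated by the class of `f` is finitely generated over `R`
(i.e. there are finitely many Laurent polynomials `P i` such that every `p·f`, for `p`
a Laurent polynomial, is congruent modulo Laurent polynomials to an `R`-linear
combination of the `P i · f`), then there is a Laurent polynomial `Q` with unit leading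
and trailing coefficients such that `Q·f` is a Laurent polynomial, i.e. `f` lies in the
image of `S⁻¹R[X,X⁻¹]` in `R((X))`. -/
theorem rational_of_Mf_finite
    (R : Type*) [CommRing R] [IsNoetherianRing R] (f : LaurentSeries R)
    (h : ∃ (k : ℕ) (P : Fin k → LaurentSeries R), (∀ i, (P i).support.Finite) ∧
      ∀ p : LaurentSeries R, p.support.Finite →
        ∃ (c : Fin k → R) (q : LaurentSeries R), q.support.Finite ∧
          p * f = (∑ i, c i • (P i * f)) + q) :
    ∃ Q : LaurentSeries R, Q.support.Finite ∧ UnitEnds Q ∧ (Q * f).support.Finite := by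
  obtain ⟨k, P, -, hP⟩ := h
  have hN := fg_span (R := R) (Set.finite_range fun i ↦ (finSuppSubmodule ℤ R).mkQ (P i * f))
  have hf (t : ℤ) := mkQ_mul_mem_span hP ((Set.finite_singleton t).subset
    (support_single_subset (r := (1 : R))))
  obtain ⟨K, c, hχf⟩ := exists_monicRelation_mul_mem hN hf fun n ↦ n + 1
  obtain ⟨M, b, hψf⟩ := exists_monicRelation_mul_mem hN hf fun n ↦ -n - 1
  have hχ : (monicRelation (K + 1 : ℤ) (fun j : Fin K ↦ (j + 1 : ℤ)) c).support ⊆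
      Set.Icc 1 (K + 1) :=
    (support_monicRelation_subset _ _ c).trans <| Set.insert_subset_iff.mpr
      ⟨by simp, Set.range_subset_iff.mpr fun j ↦ by simp⟩
  have hψ : (monicRelation (-M - 1 : ℤ) (fun j : Fin M ↦ (-j - 1 : ℤ)) b).support ⊆
      Set.Icc (-M - 1) (-1) :=
    (support_monicRelation_subset _ _ b).trans <| Set.insert_subset_iff.mpr
      ⟨by simp, Set.range_subset_iff.mpr fun j ↦ by simp⟩
  have hQ := unitEnds_add hψ hχ (by omega) (by omega)
    (by
      rw [coeff_monicRelation_self fun ⟨j, hj⟩ ↦ by simp only at hj; omega]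
      exact isUnit_one)
    (by
      rw [coeff_monicRelation_self fun ⟨j, hj⟩ ↦ by simp only at hj; omega]
      exact isUnit_one)
  exact ⟨_, hQ.support_finite, hQ, by rw [add_mul]; exact add_mem hψf hχf⟩
end

section
/- Let $R$ be a commutative ring, let $f \in R((X)) = R[[X]][X^{-1}]$, and suppose there exists a Laurent polynomial $Q \in R[X,X^{-1}]$ with unit leading and trailing coefficients such that $Qf \in R[X,X^{-1}]$. Then the $R[X,X^{-1}]$-submodule $M_f$ of $R((X))/R[X,X^{-1}]$ generated by the image of $f$ is a finitely generated $R$-module; in fact, if $Q$ has degree span $d$ (difference between highest and lowest degrees), then $M_f$ is generated over $R$ by the images of $f, Xf, \dots, X^{d-1}f$. -/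
/-!
Write `F` for the finitely supported series and `N` for `F` plus the `R`-span of
`f, X f, …, X^{d-1} f`. Multiplying `Q f ∈ F` by `X^j` gives `∑ₖ Q_k X^{j+k} f ∈ F`, a linear
recurrence among the `X^i f` modulo `F` whose extreme coefficients `Q_m` and `Q_n` are units.
Solving it for its top term pushes membership of `X^i f` in `N` upward from the window
`0 ≤ i < d`, and solving it for its bottom term pushes it downward, so every `X^i f`, hence every
`p f` with `p` a Laurent polynomial, lies in `N`.
-/

open HahnSeries

theorem Int.forall_of_window {P : ℤ → Prop} {m n : ℤ}
    (base : ∀ k, 0 ≤ k → k < n - m → P k)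
    (up : ∀ j, (∀ k, m ≤ k → k < n → P (j + k)) → P (j + n))
    (down : ∀ j, (∀ k, m < k → k ≤ n → P (j + k)) → P (j + m)) (j : ℤ) : P j := by
  have nonneg (k : ℕ) : P k := by
    induction k using Nat.strong_induction_on with
    | _ k ih =>
      by_cases hk : (k : ℤ) < n - m
      · exact base k (Int.natCast_nonneg k) hk
      · have := up (k - n) fun i hmi hin => by
          lift k - n + i to ℕ using (by omega) with t ht
          exact ih t (by omega)
        simpa using this
  have neg (k : ℕ) : P (-k) := by
    induction k using Nat.strong_induction_on with
    | _ k ih =>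
      have := down (-k - m) fun i hmi hin => by
        rcases le_or_gt 0 (-k - m + i) with h | h
        · lift -k - m + i to ℕ using h with t
          exact nonneg t
        · obtain ⟨t, ht⟩ : ∃ t : ℕ, -k - m + i = -t := ⟨(m - i + k).toNat, by omega⟩
          rw [ht]
          exact ih t (by omega)
      simpa using this
  obtain ⟨k, rfl | rfl⟩ := Int.eq_nat_or_neg j
  exacts [nonneg k, neg k]

theorem Submodule.mem_of_isUnit_of_sum_smul_mem {R M ι : Type*} [Ring R] [AddCommGroup M]
    [Module R M] (N : Submodule R M) {s : Finset ι} {c : ι → R} {v : ι → M} {i : ι}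
    (hi : i ∈ s) (hc : IsUnit (c i)) (hsum : ∑ k ∈ s, c k • v k ∈ N)
    (hv : ∀ k ∈ s, k ≠ i → v k ∈ N) : v i ∈ N := by
  classical
  rw [← Finset.add_sum_erase s _ hi] at hsum
  have hrest : ∑ k ∈ s.erase i, c k • v k ∈ N := N.sum_mem fun k hk =>
    N.smul_mem _ (hv k (Finset.mem_of_mem_erase hk) (Finset.ne_of_mem_erase hk))
  exact (N.smul_mem_iff_of_isUnit hc).1 ((N.add_mem_iff_left hrest).1 hsum)

namespace HahnSeries

section Semiring

variable (Γ R : Type*) [PartialOrder Γ] [Semiring R]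

/-- For `Γ = ℤ`, the Laurent polynomials inside `LaurentSeries R`. -/
def finiteSupport : Submodule R (HahnSeries Γ R) where
  carrier := {x | x.support.Finite}
  add_mem' hx hy := (hx.union hy).subset (support_add_subset _ _)
  zero_mem' := by simp
  smul_mem' r _ hx := hx.subset (support_smul_subset r _)

variable {Γ R}

theorem eq_sum_single_of_support_subset {x : HahnSeries Γ R} {s : Finset Γ}
    (hs : x.support ⊆ s) : x = ∑ k ∈ s, single k (x.coeff k) := by
  ext t
  rw [coeff_sum, Finset.sum_eq_single t (fun k _ hk => coeff_single_of_ne hk.symm),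
    coeff_single_same]
  intro ht
  rw [coeff_single_same]
  exact not_not.1 fun h => ht (hs h)

end Semiring

section Ring

variable {Γ R : Type*} [AddCommGroup Γ] [PartialOrder Γ] [IsOrderedAddMonoid Γ] [CommRing R]

theorem single_mul_mem_finiteSupport (a : Γ) (r : R) {x : HahnSeries Γ R}
    (hx : x ∈ finiteSupport Γ R) : single a r * x ∈ finiteSupport Γ R := by
  refine (hx.preimage (sub_left_injective (b := a)).injOn).subset fun b hb => ?_
  rw [mem_support, coeff_single_mul] at hb
  exact right_ne_zero_of_mul hb

theorem single_mul_eq_smul (a : Γ) (r : R) (x : HahnSeries Γ R) :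
    single a r * x = r • (single a 1 * x) := by
  rw [← single_zero_mul_eq_smul, ← mul_assoc, single_mul_single, zero_add, mul_one]

theorem single_mul_mul_eq_sum (a : Γ) {Q : HahnSeries Γ R} {s : Finset Γ}
    (hs : Q.support ⊆ s) (f : HahnSeries Γ R) :
    single a 1 * (Q * f) = ∑ k ∈ s, Q.coeff k • (single (a + k) 1 * f) := by
  conv_lhs => rw [eq_sum_single_of_support_subset hs]
  simp only [Finset.sum_mul, Finset.mul_sum, ← mul_assoc, single_mul_single, one_mul]
  exact Finset.sum_congr rfl fun k _ => single_mul_eq_smul _ _ f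

theorem mul_mem_of_forall_single_mul_mem {N : Submodule R (HahnSeries Γ R)}
    {p f : HahnSeries Γ R} (hp : p.support.Finite) (hf : ∀ a, single a 1 * f ∈ N) :
    p * f ∈ N := by
  rw [eq_sum_single_of_support_subset hp.coe_toFinset.symm.subset, Finset.sum_mul]
  exact N.sum_mem fun k _ => single_mul_eq_smul k _ f ▸ N.smul_mem _ (hf k)

end Ring

end HahnSeries

namespace LaurentSeries

theorem single_mul_mem_of_window {R : Type*} [CommRing R] {f Q : LaurentSeries R} {m n : ℤ}
    (hmn : m ≤ n) (hbd : Q.support ⊆ Set.Icc m n) (hum : IsUnit (Q.coeff m))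
    (hun : IsUnit (Q.coeff n)) (hQf : (Q * f).support.Finite)
    {N : Submodule R (LaurentSeries R)} (hN : finiteSupport ℤ R ≤ N)
    (base : ∀ k, 0 ≤ k → k < n - m → single k 1 * f ∈ N) (j : ℤ) :
    single j 1 * f ∈ N := by
  have hrel (j : ℤ) : ∑ k ∈ Finset.Icc m n, Q.coeff k • (single (j + k) 1 * f) ∈ N := by
    rw [← single_mul_mul_eq_sum j (by simpa using hbd)]
    exact hN (single_mul_mem_finiteSupport j 1 hQf)
  refine Int.forall_of_window base (fun j hj => ?_) (fun j hj => ?_) j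
  · refine N.mem_of_isUnit_of_sum_smul_mem (c := Q.coeff) (Finset.right_mem_Icc.2 hmn) hun
      (hrel j) ?_
    intro k hk hkn
    rw [Finset.mem_Icc] at hk
    exact hj k hk.1 (lt_of_le_of_ne hk.2 hkn)
  · refine N.mem_of_isUnit_of_sum_smul_mem (c := Q.coeff) (Finset.left_mem_Icc.2 hmn) hum
      (hrel j) ?_
    intro k hk hkm
    rw [Finset.mem_Icc] at hk
    exact hj k (lt_of_le_of_ne hk.1 hkm.symm) hk.2

end LaurentSeries

/-- Suppose `Q` is a Laurent polynomial with support contained in `[m, n]` and whose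
coefficients at `m` and `n` are units (so `Q` has unit trailing and leading
coefficients), and suppose `Q·f` is a Laurent polynomial.  Then the cyclic
`R[X,X⁻¹]`-submodule `M_f` of `R((X))/R[X,X⁻¹]` generated by the class of `f` is
generated as an `R`-module by the classes of `f, X·f, …, X^{d-1}·f` with
`d = n - m`: every `p·f` with `p` a Laurent polynomial is congruent, modulo Laurent
polynomials, to an `R`-linear combination of `X^i·f` for `0 ≤ i < d`.  In particular
`M_f` is a finitely generated `R`-module. -/
theorem Mf_finite_of_rational
    (R : Type*) [CommRing R] (f Q : LaurentSeries R) (m n : ℤ)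
    (hbd : ∀ k ∈ Q.support, m ≤ k ∧ k ≤ n)
    (hum : IsUnit (Q.coeff m)) (hun : IsUnit (Q.coeff n))
    (hQf : (Q * f).support.Finite) :
    ∀ p : LaurentSeries R, p.support.Finite →
      ∃ (c : Fin (n - m).toNat → R) (q : LaurentSeries R), q.support.Finite ∧
        p * f = (∑ i, c i • (HahnSeries.single (i : ℤ) (1 : R) * f)) + q := by
  intro p hp
  rcases subsingleton_or_nontrivial R with hR | hR
  · exact ⟨0, 0, by simp, Subsingleton.elim _ _⟩
  have hm : m ∈ Q.support := hum.ne_zero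
  let N := finiteSupport ℤ R ⊔
    Submodule.span R (Set.range fun i : Fin (n - m).toNat => single (i : ℤ) (1 : R) * f)
  have hbase (k : ℤ) (h0 : 0 ≤ k) (hk : k < n - m) : single k 1 * f ∈ N :=
    Submodule.mem_sup_right (Submodule.subset_span
      ⟨⟨k.toNat, by omega⟩, by simp [Int.toNat_of_nonneg h0]⟩)
  have hpf : p * f ∈ N := mul_mem_of_forall_single_mul_mem hp
    (LaurentSeries.single_mul_mem_of_window ((hbd m hm).1.trans (hbd m hm).2) hbd hum hun hQf
      le_sup_left hbase)
  obtain ⟨q, hq, g, hg, hqg⟩ := Submodule.mem_sup.1 hpf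
  obtain ⟨c, rfl⟩ := (Submodule.mem_span_range_iff_exists_fun R).1 hg
  exact ⟨c, q, hq, by rw [← hqg, add_comm]⟩
end

section
/- Let $R$ be a commutative Noetherian ring and $R' \subseteq R$ a Noetherian subring such that $R$ is finitely generated as an $R'$-module. Let $f \in R((X))$ be a formal Laurent series such that (a) all coefficients of $f$ lie in $R'$, and (b) there exists $Q \in R[X,X^{-1}]$ with unit leading and trailing coefficients in $R$ such that $Qf \in R[X,X^{-1}]$. Then there exists $Q' \in R'[X,X^{-1}]$ whose leading and trailing coefficients are units in $R'$ such that $Q'f \in R'[X,X^{-1}]$. In other words, $(S')^{-1}R'[X,X^{-1}]$ equals the intersection in $R((X))$ of $R'((X))$ and $S^{-1}R[X,X^{-1}]$. -/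
/-!
Let `V = R((X)) ⧸ R[X, X⁻¹]` and let `g k` be the class of `X ^ k * f` in `V`; multiplication by
`X` and by `X⁻¹` act on `V` and shift `g` by `±1`. Since `Q * f ∈ R[X, X⁻¹]`, the sequence `g`
satisfies a linear recurrence whose extreme coefficients are units, so any window of it spans all
of it over `R`. As `R` is finite over `R'` and `R'` is Noetherian, the `R'`-span `N` of `g` is
finitely generated. Cayley–Hamilton for `X` and for `X⁻¹` acting on `N` gives monic `p, q ∈ R'[X]`
with `p(X) f` and `q(X⁻¹) f` in `R[X, X⁻¹]`, and `Q' = X p(X) + q(X⁻¹)` has leading and trailing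
coefficient `1`.
-/

open Finset Polynomial Submodule HahnSeries

theorem Submodule.mem_of_sum_smul_eq_zero {A M ι : Type*} [Ring A] [AddCommGroup M] [Module A M]
    [DecidableEq ι] (T : Submodule A M) {s : Finset ι} {c : ι → A} {v : ι → M}
    (h : ∑ j ∈ s, c j • v j = 0) {i : ι} (hi : i ∈ s) (hc : IsUnit (c i))
    (hT : ∀ j ∈ s, j ≠ i → v j ∈ T) : v i ∈ T := by
  rw [← add_sum_erase s _ hi] at h
  rw [← T.smul_mem_iff_of_isUnit hc, eq_neg_of_add_eq_zero_left h]
  exact T.neg_mem <| T.sum_mem fun j hj =>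
    T.smul_mem _ (hT j (mem_of_mem_erase hj) (ne_of_mem_erase hj))

section Recurrence

variable {A M : Type*} [CommRing A] [AddCommGroup M] [Module A M] {g : ℤ → M}

theorem span_range_eq_span_image_Icc_of_recurrence {c : ℤ → A} {m n : ℤ} (hmn : m ≤ n)
    (hm : IsUnit (c m)) (hn : IsUnit (c n))
    (hrec : ∀ t, ∑ j ∈ Icc m n, c j • g (t + j) = 0) :
    span A (Set.range g) = span A (g '' Icc m n) := by
  set T := span A (g '' Icc m n)
  refine le_antisymm (span_le.2 ?_) (span_mono (Set.image_subset_range _ _))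
  have window : ∀ t, ∀ j ∈ Icc m n, g (t + j) ∈ T := by
    intro t
    induction t using Int.inductionOn' (b := 0) with
    | zero =>
      intro j hj
      rw [zero_add]
      exact subset_span (Set.mem_image_of_mem g hj)
    | succ t _ ih =>
      have shift (j : ℤ) (hj : j ∈ Icc m n) (hjn : j ≠ n) : g (t + 1 + j) ∈ T := by
        rw [add_right_comm, add_assoc]
        exact ih _ (by rw [mem_Icc] at hj ⊢; omega)
      intro j hj
      by_cases hjn : j = n
      · subst hjn
        exact T.mem_of_sum_smul_eq_zero (hrec (t + 1)) (right_mem_Icc.2 hmn) hn shift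
      · exact shift j hj hjn
    | pred t _ ih =>
      have shift (j : ℤ) (hj : j ∈ Icc m n) (hjm : j ≠ m) : g (t - 1 + j) ∈ T := by
        rw [sub_add_eq_add_sub, add_sub_assoc]
        exact ih _ (by rw [mem_Icc] at hj ⊢; omega)
      intro j hj
      by_cases hjm : j = m
      · subst hjm
        exact T.mem_of_sum_smul_eq_zero (hrec (t - 1)) (left_mem_Icc.2 hmn) hm shift
      · exact shift j hj hjm
  rintro _ ⟨k, rfl⟩
  simpa using window (k - m) m (left_mem_Icc.2 hmn)

variable {φ : M →ₗ[A] M}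

theorem pow_apply_of_shift (hφ : ∀ k, φ (g k) = g (k + 1)) (j : ℕ) (k : ℤ) :
    (φ ^ j) (g k) = g (k + j) := by
  induction j generalizing k with
  | zero => simp
  | succ j ih => rw [pow_succ, Module.End.mul_apply, hφ, ih]; push_cast; ring_nf

theorem aeval_apply_of_shift (hφ : ∀ k, φ (g k) = g (k + 1)) (p : A[X]) (k : ℤ) :
    aeval φ p (g k) = ∑ j ∈ range (p.natDegree + 1), p.coeff j • g (k + j) := by
  simp [aeval_eq_sum_range, pow_apply_of_shift hφ]

theorem exists_monic_sum_smul_eq_zero_of_fg (hφ : ∀ k, φ (g k) = g (k + 1))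
    (hg : (span A (Set.range g)).FG) :
    ∃ p : A[X], p.Monic ∧
      ∀ k, ∑ j ∈ range (p.natDegree + 1), p.coeff j • g (k + j) = 0 := by
  set N := span A (Set.range g)
  have hgN (k : ℤ) : g k ∈ N := subset_span (Set.mem_range_self k)
  have hN : N ≤ N.comap φ := span_le.2 <| by rintro _ ⟨k, rfl⟩; simpa [hφ] using hgN (k + 1)
  have : Module.Finite A N := Module.Finite.iff_fg.2 hg
  obtain ⟨p, hp, hp0⟩ := LinearMap.exists_monic_and_aeval_eq_zero A (φ.restrict hN)
  refine ⟨p, hp, fun k => ?_⟩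
  have := aeval_apply_of_shift (φ := φ.restrict hN) (g := fun k => ⟨g k, hgN k⟩)
    (fun k => Subtype.ext <| by simp [hφ]) p k
  simpa [hp0] using congrArg Subtype.val this.symm

end Recurrence

theorem HahnSeries.eq_sum_single_of_support_subset_s6 {Γ R : Type*} [PartialOrder Γ] [AddCommMonoid R]
    {x : HahnSeries Γ R} {s : Finset Γ} (hs : x.support ⊆ s) :
    x = ∑ j ∈ s, single j (x.coeff j) := by
  ext t
  classical
  simp only [coeff_sum, coeff_single, sum_ite_eq]
  by_cases ht : t ∈ s
  · rw [if_pos ht]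
  · rw [if_neg ht]
    exact not_ne_iff.1 fun h => ht (hs h)

theorem HahnSeries.coeff_mul_mem {Γ R : Type*} [AddCommMonoid Γ] [PartialOrder Γ]
    [IsOrderedCancelAddMonoid Γ] [Ring R] (S : Subring R) {x y : HahnSeries Γ R}
    (hx : ∀ i, x.coeff i ∈ S) (hy : ∀ i, y.coeff i ∈ S) (a : Γ) :
    (x * y).coeff a ∈ S := by
  rw [coeff_mul]
  exact S.sum_mem fun ij _ => S.mul_mem (hx _) (hy _)

namespace LaurentSeries

variable {R : Type*} [CommRing R]

variable (R) in
def laurentPolynomials : Submodule R (LaurentSeries R) where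
  carrier := {x | x.support.Finite}
  add_mem' hx hy := (hx.union hy).subset (support_add_subset _ _)
  zero_mem' := by simp
  smul_mem' c _ hx := hx.subset (support_smul_subset c _)

open scoped Pointwise in
theorem single_mul_mem_laurentPolynomials (a : ℤ) (r : R) {x : LaurentSeries R}
    (hx : x ∈ laurentPolynomials R) : single a r * x ∈ laurentPolynomials R :=
  (((Set.finite_singleton a).subset support_single_subset).add hx).subset support_mul_subset

noncomputable def mulSingle (a : ℤ) : LaurentSeries R →ₗ[R] LaurentSeries R where
  toFun x := single a 1 * x
  map_add' := mul_add _
  map_smul' c x := by simp only [← C_mul_eq_smul, RingHom.id_apply, mul_left_comm]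

noncomputable def mulSingleQ (a : ℤ) :
    (LaurentSeries R ⧸ laurentPolynomials R) →ₗ[R] LaurentSeries R ⧸ laurentPolynomials R :=
  (laurentPolynomials R).mapQ _ (mulSingle a) fun _ hx =>
    single_mul_mem_laurentPolynomials a 1 hx

noncomputable def shiftClass (f : LaurentSeries R) (k : ℤ) :
    LaurentSeries R ⧸ laurentPolynomials R :=
  Submodule.Quotient.mk (single k 1 * f)

theorem mulSingleQ_shiftClass (f : LaurentSeries R) (a k : ℤ) :
    mulSingleQ a (shiftClass f k) = shiftClass f (k + a) := by
  simp [mulSingleQ, mulSingle, shiftClass, ← mul_assoc, single_mul_single, add_comm]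

theorem mk_sum_single_mul {ι : Type*} (s : Finset ι) (a : ι → ℤ) (c : ι → R)
    (f : LaurentSeries R) :
    (Submodule.Quotient.mk ((∑ i ∈ s, single (a i) (c i)) * f) :
      LaurentSeries R ⧸ laurentPolynomials R) = ∑ i ∈ s, c i • shiftClass f (a i) := by
  rw [← mkQ_apply, sum_mul, map_sum]
  refine sum_congr rfl fun i _ => ?_
  rw [shiftClass, ← Submodule.Quotient.mk_smul, ← C_mul_eq_smul, ← mul_assoc, C_apply,
    single_mul_single, zero_add, mul_one, mkQ_apply]

theorem sum_smul_shiftClass_eq_zero {Q f : LaurentSeries R} {s : Finset ℤ}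
    (hQ : Q.support ⊆ s) (hQf : Q * f ∈ laurentPolynomials R) (t : ℤ) :
    ∑ j ∈ s, Q.coeff j • shiftClass f (t + j) = 0 := by
  have hshift : ∑ j ∈ s, single (t + j) (Q.coeff j) = single t 1 * Q := by
    conv_rhs => rw [eq_sum_single_of_support_subset_s6 hQ, mul_sum]
    simp only [single_mul_single, one_mul]
  rw [← mk_sum_single_mul, hshift, mul_assoc, Submodule.Quotient.mk_eq_zero]
  exact single_mul_mem_laurentPolynomials t 1 hQf

theorem fg_span_range_shiftClass {Q f : LaurentSeries R} {m n : ℤ}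
    (hbd : ∀ k ∈ Q.support, m ≤ k ∧ k ≤ n) (hm : IsUnit (Q.coeff m))
    (hn : IsUnit (Q.coeff n))
    (hQf : Q * f ∈ laurentPolynomials R) : (span R (Set.range (shiftClass f))).FG := by
  obtain hmn | hnm := le_or_gt m n
  · have hQ : Q.support ⊆ Icc m n := fun k hk => mem_Icc.2 (hbd k hk)
    rw [span_range_eq_span_image_Icc_of_recurrence hmn hm hn
      (sum_smul_shiftClass_eq_zero hQ hQf)]
    exact fg_span ((Icc m n).finite_toSet.image _)
  · have hm0 : Q.coeff m = 0 := by_contra fun h => hnm.not_ge (hbd m h).2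
    have : Subsingleton R := subsingleton_of_zero_eq_one (isUnit_zero_iff.1 (hm0 ▸ hm))
    have : Subsingleton (LaurentSeries R ⧸ laurentPolynomials R) := Module.subsingleton R _
    rw [Subsingleton.elim (span R _) ⊥]
    exact fg_bot

/-- `X * p(X) + q(X⁻¹)`. -/
noncomputable def ofPolynomials {R' : Subring R} (p q : R'[X]) : LaurentSeries R :=
  ∑ j ∈ range (p.natDegree + 1), single (1 + j : ℤ) (p.coeff j : R) +
    ∑ j ∈ range (q.natDegree + 1), single (-j : ℤ) (q.coeff j : R)

variable {R' : Subring R} (p q : R'[X])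

theorem coeff_ofPolynomials (t : ℤ) :
    (ofPolynomials p q).coeff t =
      (∑ j ∈ range (p.natDegree + 1), if t = 1 + j then (p.coeff j : R) else 0) +
      ∑ j ∈ range (q.natDegree + 1), if t = -j then (q.coeff j : R) else 0 := by
  simp only [ofPolynomials, HahnSeries.coeff_add, HahnSeries.coeff_sum, coeff_single]
  congr!

theorem support_ofPolynomials_subset :
    (ofPolynomials p q).support ⊆ Icc (-q.natDegree : ℤ) (p.natDegree + 1) := by
  intro t ht
  by_contra hIcc
  rw [mem_coe, mem_Icc] at hIcc
  refine ht ?_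
  rw [coeff_ofPolynomials, sum_eq_zero, sum_eq_zero, add_zero] <;>
  · intro j hj
    rw [mem_range] at hj
    exact if_neg (by omega)

theorem coeff_ofPolynomials_mem (t : ℤ) : (ofPolynomials p q).coeff t ∈ R' := by
  rw [coeff_ofPolynomials]
  refine add_mem (sum_mem fun j _ => ?_) (sum_mem fun j _ => ?_) <;>
  · split_ifs
    exacts [SetLike.coe_mem _, zero_mem _]

theorem coeff_ofPolynomials_top (hp : p.Monic) :
    (ofPolynomials p q).coeff (p.natDegree + 1) = 1 := by
  rw [coeff_ofPolynomials, sum_eq_single p.natDegree, if_pos (add_comm _ _), hp.coeff_natDegree,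
    sum_eq_zero, add_zero, OneMemClass.coe_one]
  · exact fun j _ => if_neg (by omega)
  · exact fun j hj hjd => if_neg (by rw [mem_range] at hj; omega)
  · exact fun h => absurd (self_mem_range_succ _) h

theorem coeff_ofPolynomials_bot (hq : q.Monic) :
    (ofPolynomials p q).coeff (-q.natDegree) = 1 := by
  rw [coeff_ofPolynomials, sum_eq_zero (fun j _ => if_neg (by omega)), zero_add,
    sum_eq_single q.natDegree, if_pos rfl, hq.coeff_natDegree, OneMemClass.coe_one]
  · exact fun j hj hjd => if_neg (by rw [mem_range] at hj; omega)
  · exact fun h => absurd (self_mem_range_succ _) h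

theorem mk_ofPolynomials_mul (f : LaurentSeries R) :
    (Submodule.Quotient.mk (ofPolynomials p q * f) : LaurentSeries R ⧸ laurentPolynomials R) =
      ∑ j ∈ range (p.natDegree + 1), p.coeff j • shiftClass f (1 + j) +
      ∑ j ∈ range (q.natDegree + 1), q.coeff j • shiftClass f (-j) := by
  rw [ofPolynomials, add_mul, Submodule.Quotient.mk_add, mk_sum_single_mul, mk_sum_single_mul]
  rfl

end LaurentSeries

open LaurentSeries in
theorem rational_descends_to_subring_general
    (R : Type*) [CommRing R] (R' : Subring R)
    [IsNoetherianRing R'] [Module.Finite R' R]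
    (f : LaurentSeries R) (hf : ∀ i : ℤ, f.coeff i ∈ R')
    (Q : LaurentSeries R)
    (m n : ℤ) (hbd : ∀ k ∈ Q.support, m ≤ k ∧ k ≤ n)
    (hum : IsUnit (Q.coeff m)) (hun : IsUnit (Q.coeff n))
    (hQf : (Q * f).support.Finite) :
    ∃ (Q' : LaurentSeries R) (m' n' : ℤ),
      Q'.support.Finite ∧ (∀ i : ℤ, Q'.coeff i ∈ R') ∧
      (∀ k ∈ Q'.support, m' ≤ k ∧ k ≤ n') ∧
      (∃ u ∈ R', Q'.coeff m' * u = 1) ∧ (∃ v ∈ R', Q'.coeff n' * v = 1) ∧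
      (Q' * f).support.Finite ∧ (∀ i : ℤ, (Q' * f).coeff i ∈ R') := by
  have hfg : (span R' (Set.range (shiftClass f))).FG :=
    (fg_span_range_shiftClass hbd hum hun hQf).restrictScalars.of_le
      (span_le_restrictScalars R' R _)
  obtain ⟨p, hp, hpf⟩ := exists_monic_sum_smul_eq_zero_of_fg
    (φ := (mulSingleQ 1).restrictScalars R') (mulSingleQ_shiftClass f 1) hfg
  obtain ⟨q, hq, hqf⟩ := exists_monic_sum_smul_eq_zero_of_fg
    (φ := (mulSingleQ (-1)).restrictScalars R') (g := fun k => shiftClass f (-k))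
    (fun k => by simp [mulSingleQ_shiftClass, add_comm])
    (by rwa [← neg_surjective.range_comp] at hfg)
  have hQ'f : ofPolynomials p q * f ∈ laurentPolynomials R := by
    rw [← Submodule.Quotient.mk_eq_zero, mk_ofPolynomials_mul, hpf 1]
    simpa using hqf 0
  refine ⟨ofPolynomials p q, -q.natDegree, p.natDegree + 1,
    (Icc _ _).finite_toSet.subset (support_ofPolynomials_subset p q),
    coeff_ofPolynomials_mem p q, fun k hk => mem_Icc.1 (support_ofPolynomials_subset p q hk),
    ⟨1, one_mem _, by rw [coeff_ofPolynomials_bot p q hq, one_mul]⟩,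
    ⟨1, one_mem _, by rw [coeff_ofPolynomials_top p q hp, one_mul]⟩, hQ'f,
    coeff_mul_mem R' (coeff_ofPolynomials_mem p q) hf⟩

/-- Let `R` be Noetherian, `R' ⊆ R` a Noetherian subring with `R` finitely generated
as an `R'`-module.  Let `f ∈ R((X))` have all coefficients in `R'`, and suppose there
is a Laurent polynomial `Q` over `R` with unit leading and trailing coefficients such
that `Q·f` is a Laurent polynomial.  Then there is a Laurent polynomial `Q'` with
coefficients in `R'`, whose leading and trailing coefficients are units *of `R'`*,
such that `Q'·f` is a Laurent polynomial with coefficients in `R'`.  (That is,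
`(S')⁻¹R'[X,X⁻¹] = R'((X)) ∩ S⁻¹R[X,X⁻¹]` inside `R((X))`.) -/
theorem rational_descends_to_subring
    (R : Type*) [CommRing R] [IsNoetherianRing R] (R' : Subring R)
    [IsNoetherianRing R'] [Module.Finite R' R]
    (f : LaurentSeries R) (hf : ∀ i : ℤ, f.coeff i ∈ R')
    (Q : LaurentSeries R) (hQfin : Q.support.Finite)
    (m n : ℤ) (hbd : ∀ k ∈ Q.support, m ≤ k ∧ k ≤ n)
    (hum : IsUnit (Q.coeff m)) (hun : IsUnit (Q.coeff n))
    (hQf : (Q * f).support.Finite) :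
    ∃ (Q' : LaurentSeries R) (m' n' : ℤ),
      Q'.support.Finite ∧ (∀ i : ℤ, Q'.coeff i ∈ R') ∧
      (∀ k ∈ Q'.support, m' ≤ k ∧ k ≤ n') ∧
      (∃ u ∈ R', Q'.coeff m' * u = 1) ∧ (∃ v ∈ R', Q'.coeff n' * v = 1) ∧
      (Q' * f).support.Finite ∧ (∀ i : ℤ, (Q' * f).coeff i ∈ R') :=
  rational_descends_to_subring_general R R' f hf Q m n hbd hum hun hQf
end

section
/- Let $R$ be a commutative ring, $d \geq 1$ an integer, and $f \in R((X))$ a formal Laurent series. Suppose that in the $R[X,X^{-1}]$-module $R((X))/R[X,X^{-1}]$, the classes of $X^{-1}f$ and $X^d f$ both lie in the $R$-submodule spanned by the classes of $f, Xf, \dots, X^{d-1}f$. Then there exists a Laurent polynomial $T \in R[X,X^{-1}]$ of the form $T = X^{-1} + (\text{terms of degrees } 0 \text{ through } d-1) + X^d$ (so with leading and trailing coefficients equal to $1$) such that $Tf \in R[X,X^{-1}]$. -/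
namespace HahnSeries

theorem support_add_finite {Γ R : Type*} [PartialOrder Γ] [AddMonoid R] {x y : R⟦Γ⟧}
    (hx : x.support.Finite) (hy : y.support.Finite) : (x + y).support.Finite :=
  (hx.union hy).subset (support_add_subset x y)

variable {Γ R : Type*} [AddCommMonoid Γ] [PartialOrder Γ] [IsOrderedCancelAddMonoid Γ]
  [CommSemiring R]

theorem single_mul_eq_smul_single_one_mul (g : Γ) (c : R) (x : R⟦Γ⟧) :
    single g c * x = c • (single g 1 * x) := by
  rw [← C_mul_eq_smul, ← mul_assoc, C_apply, single_mul_single, zero_add, mul_one]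

theorem sum_single_mul_eq_sum_smul {ι : Type*} (s : Finset ι) (g : ι → Γ) (c : ι → R)
    (x : R⟦Γ⟧) : (∑ i ∈ s, single (g i) (c i)) * x = ∑ i ∈ s, c i • (single (g i) 1 * x) := by
  simp only [Finset.sum_mul, single_mul_eq_smul_single_one_mul _ (c _)]

end HahnSeries

theorem exists_T_of_recurrences_general
    (R : Type*) [CommRing R] (d : ℕ) (f : LaurentSeries R)
    (p q : Fin d → R)
    (h1 : ((HahnSeries.single (-1 : ℤ) (1 : R)) * f
        - ∑ i, p i • (HahnSeries.single (i : ℤ) (1 : R) * f)).support.Finite)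
    (h2 : ((HahnSeries.single (d : ℤ) (1 : R)) * f
        - ∑ i, q i • (HahnSeries.single (i : ℤ) (1 : R) * f)).support.Finite) :
    ∃ t : Fin d → R,
      (((HahnSeries.single (-1 : ℤ) (1 : R))
        + (∑ i : Fin d, HahnSeries.single ((i : ℤ)) (t i))
        + HahnSeries.single (d : ℤ) (1 : R)) * f).support.Finite := by
  refine ⟨fun i => -(p i + q i), ?_⟩
  have hT : ((HahnSeries.single (-1 : ℤ) (1 : R))
        + (∑ i : Fin d, HahnSeries.single ((i : ℤ)) (-(p i + q i)))
        + HahnSeries.single (d : ℤ) (1 : R)) * f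
      = ((HahnSeries.single (-1 : ℤ) (1 : R)) * f
          - ∑ i, p i • (HahnSeries.single (i : ℤ) (1 : R) * f))
        + ((HahnSeries.single (d : ℤ) (1 : R)) * f
          - ∑ i, q i • (HahnSeries.single (i : ℤ) (1 : R) * f)) := by
    rw [add_mul, add_mul, HahnSeries.sum_single_mul_eq_sum_smul]
    simp only [neg_add, add_smul, neg_smul, Finset.sum_add_distrib, Finset.sum_neg_distrib]
    abel
  exact hT ▸ HahnSeries.support_add_finite h1 h2

/-- Let `f ∈ R((X))` and `d ≥ 1`.  If, modulo Laurent polynomials, both `X⁻¹·f` and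
`X^d·f` are `R`-linear combinations of `f, X·f, …, X^{d-1}·f`, then there is a
Laurent polynomial `T = X⁻¹ + (terms of degrees 0 through d-1) + X^d` (whose leading
and trailing coefficients are thus `1`) such that `T·f` is a Laurent polynomial. -/
theorem exists_T_of_recurrences
    (R : Type*) [CommRing R] (d : ℕ) (hd : 1 ≤ d) (f : LaurentSeries R)
    (p q : Fin d → R)
    (h1 : ((HahnSeries.single (-1 : ℤ) (1 : R)) * f
        - ∑ i, p i • (HahnSeries.single (i : ℤ) (1 : R) * f)).support.Finite)
    (h2 : ((HahnSeries.single (d : ℤ) (1 : R)) * f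
        - ∑ i, q i • (HahnSeries.single (i : ℤ) (1 : R) * f)).support.Finite) :
    ∃ t : Fin d → R,
      (((HahnSeries.single (-1 : ℤ) (1 : R))
        + (∑ i : Fin d, HahnSeries.single ((i : ℤ)) (t i))
        + HahnSeries.single (d : ℤ) (1 : R)) * f).support.Finite :=
  exists_T_of_recurrences_general R d f p q h1 h2
end
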